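/- Let U be a bounded smooth domain in ℝ³ = ℂ×ℝ whose closure does not contain the origin, let a ∈ ℝ and let f : ℝ → ℝ be continuous. (i) If v ∈ C²(U) ∩ C(closure U) satisfies −Δv(x) + (a/(4|x|))v(x) = (1/(4|x|))f(v(x)) for all x ∈ U and v = 0 on ∂U, then u := v ∘ π belongs to C²(Ω) ∩ C(closure Ω), where Ω := π^{−1}(U), and satisfies −Δu + au = f(u) in Ω and u = 0 on ∂Ω. (ii) Conversely, if v : U → ℝ is of class C² and u := v ∘ π satisfies −Δu + au = f(u) in Ω, then v satisfies −Δv + (a/(4|x|))v = (1/(4|x|))f(v) in U. -/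

import Mathlib

/-!
The Hopf map is quadratic, `π z = Q z z` for a symmetric bilinear `Q`, so `Dπ(z) = 2 Q z` and
`D²π = 2 Q`. Its components are harmonic (`∑ᵢ Q eᵢ eᵢ = 0`), and `Dπ(z)` is horizontally
conformal: the vectors `Dπ(z) eᵢ` form a tight frame of `ℝ³` with bound `4‖z‖² = 4‖π z‖`.
The second-order chain rule therefore gives `Δ(v ∘ π)(z) = 4‖π z‖ (Δv)(π z)`, and dividing by
`4‖π z‖ ≠ 0` (as `0 ∉ closure U`) turns `-Δu + a u = f(u)` at `z` into the equation for `v` at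
`π z`. Regularity and boundary values pass to `u = v ∘ π` because `π` is smooth, and the converse
holds because `π` is surjective.
-/

/-- The Laplacian (trace of the second derivative) of a real-valued function on a
finite-dimensional Euclidean space, computed in the standard orthonormal coordinates. -/
noncomputable def lap {ι : Type*} [Fintype ι] [DecidableEq ι]
    (u : EuclideanSpace ℝ ι → ℝ) (x : EuclideanSpace ℝ ι) : ℝ :=
  ∑ i, iteratedFDeriv ℝ 2 u x ![EuclideanSpace.single i 1, EuclideanSpace.single i 1]

/-- A bounded smooth domain: a nonempty bounded open set, each of whose boundary points
admits a smooth local defining function with nonvanishing differential (so that the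
boundary is a C^∞ hypersurface). -/
structure IsSmoothDomain {E : Type*} [NormedAddCommGroup E] [NormedSpace ℝ E]
    (Ω : Set E) : Prop where
  isOpen : IsOpen Ω
  isBounded : Bornology.IsBounded Ω
  nonempty : Ω.Nonempty
  smooth_boundary : ∀ x ∈ frontier Ω, ∃ f : E → ℝ, ContDiff ℝ (⊤ : ℕ∞) f ∧
    fderiv ℝ f x ≠ 0 ∧ ∀ᶠ y in nhds x, (y ∈ Ω ↔ f y < 0)

/-- The Hopf map π : ℝ⁴ = ℂ×ℂ → ℝ³ = ℂ×ℝ, π(z₁,z₂) = (2·conj(z₁)·z₂, |z₁|² − |z₂|²),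
in real coordinates (z₁ = x₀ + i x₁, z₂ = x₂ + i x₃). -/
noncomputable def hopfC (x : EuclideanSpace ℝ (Fin 4)) : EuclideanSpace ℝ (Fin 3) :=
  WithLp.toLp 2 (![(2 * (starRingEnd ℂ) (⟨x 0, x 1⟩ : ℂ) * (⟨x 2, x 3⟩ : ℂ)).re,
    (2 * (starRingEnd ℂ) (⟨x 0, x 1⟩ : ℂ) * (⟨x 2, x 3⟩ : ℂ)).im,
    ‖(⟨x 0, x 1⟩ : ℂ)‖ ^ 2 - ‖(⟨x 2, x 3⟩ : ℂ)‖ ^ 2])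

open Filter Topology InnerProductSpace

section SecondDerivative

variable {𝕜 E F G : Type*} [NontriviallyNormedField 𝕜]
  [NormedAddCommGroup E] [NormedSpace 𝕜 E] [NormedAddCommGroup F] [NormedSpace 𝕜 F]
  [NormedAddCommGroup G] [NormedSpace 𝕜 G]

theorem fderiv_fderiv_comp_apply {v : F → G} {g : E → F} {z : E}
    (hv : ContDiffAt 𝕜 2 v (g z)) (hg : ContDiffAt 𝕜 2 g z) (e e' : E) :
    fderiv 𝕜 (fderiv 𝕜 (v ∘ g)) z e e' =
      fderiv 𝕜 (fderiv 𝕜 v) (g z) (fderiv 𝕜 g z e) (fderiv 𝕜 g z e') +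
        fderiv 𝕜 v (g z) (fderiv 𝕜 (fderiv 𝕜 g) z e e') := by
  have hv_near : ∀ᶠ y in 𝓝 z, DifferentiableAt 𝕜 v (g y) :=
    hg.continuousAt.eventually ((hv.eventually (by simp)).mono
      fun _ h => h.differentiableAt two_ne_zero)
  have hg_near : ∀ᶠ y in 𝓝 z, DifferentiableAt 𝕜 g y :=
    (hg.eventually (by simp)).mono fun _ h => h.differentiableAt two_ne_zero
  have hchain : fderiv 𝕜 (v ∘ g) =ᶠ[𝓝 z] fun y => (fderiv 𝕜 v (g y)).comp (fderiv 𝕜 g y) := by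
    filter_upwards [hv_near, hg_near] with y hvy hgy
    exact fderiv_comp y hvy hgy
  have hDv : DifferentiableAt 𝕜 (fderiv 𝕜 v) (g z) :=
    (hv.fderiv_right (m := 1) le_rfl).differentiableAt one_ne_zero
  have hDg : DifferentiableAt 𝕜 (fderiv 𝕜 g) z :=
    (hg.fderiv_right (m := 1) le_rfl).differentiableAt one_ne_zero
  have hDvg : HasFDerivAt (fun y => fderiv 𝕜 v (g y))
      ((fderiv 𝕜 (fderiv 𝕜 v) (g z)).comp (fderiv 𝕜 g z)) z :=
    hDv.hasFDerivAt.comp z (hg.differentiableAt two_ne_zero).hasFDerivAt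
  rw [hchain.fderiv_eq, fderiv_clm_comp hDvg.differentiableAt hDg, hDvg.fderiv]
  simp [add_comm]

theorem fderiv_bilinear_diag (Q : E →L[𝕜] E →L[𝕜] F) :
    fderiv 𝕜 (fun x => Q x x) = fun x => Q x + Q.flip x := by
  ext1 x
  change fderiv 𝕜 (fun y => Q (id y) (id y)) x = _
  rw [(Q.hasFDerivAt_of_bilinear (hasFDerivAt_id x) (hasFDerivAt_id x)).fderiv]
  ext e
  simp

theorem fderiv_fderiv_bilinear_diag_apply (Q : E →L[𝕜] E →L[𝕜] F) (z e e' : E) :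
    fderiv 𝕜 (fderiv 𝕜 (fun x => Q x x)) z e e' = Q e e' + Q e' e := by
  rw [fderiv_bilinear_diag, show (fun x => Q x + Q.flip x) = ⇑(Q + Q.flip) from rfl,
    ContinuousLinearMap.fderiv]
  rfl

end SecondDerivative

/-- `hx` says that `x` is a tight frame with bound `c`; for `x i = A (e i)` with `(e i)`
orthonormal, it says `A ∘ A† = c • id`. -/
theorem OrthonormalBasis.sum_apply_self_eq_smul_of_sum_inner_mul_inner
    {ι κ F G : Type*} [Fintype ι] [Fintype κ] [DecidableEq κ]
    [NormedAddCommGroup F] [InnerProductSpace ℝ F] [NormedAddCommGroup G] [NormedSpace ℝ G]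
    (b : OrthonormalBasis κ ℝ F) (x : ι → F) (c : ℝ)
    (hx : ∀ u w, ∑ i, ⟪x i, u⟫_ℝ * ⟪x i, w⟫_ℝ = c * ⟪u, w⟫_ℝ) (B : F →L[ℝ] F →L[ℝ] G) :
    ∑ i, B (x i) (x i) = c • ∑ k, B (b k) (b k) := by
  have expand : ∀ y, B y y = ∑ k, ∑ l, (⟪b k, y⟫_ℝ * ⟪b l, y⟫_ℝ) • B (b k) (b l) := by
    intro y
    conv_lhs => rw [← b.sum_repr' y]
    simp only [map_sum, map_smul, FunLike.coe_sum, FunLike.coe_smul,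
      Finset.sum_apply, Pi.smul_apply, Finset.smul_sum, smul_smul]
    rw [Finset.sum_comm]
    exact Finset.sum_congr rfl fun k _ => Finset.sum_congr rfl fun l _ => by rw [mul_comm]
  calc ∑ i, B (x i) (x i)
      = ∑ k, ∑ l, (∑ i, ⟪x i, b k⟫_ℝ * ⟪x i, b l⟫_ℝ) • B (b k) (b l) := by
        simp_rw [expand, Finset.sum_smul, real_inner_comm (b _)]
        rw [Finset.sum_comm]
        exact Finset.sum_congr rfl fun _ _ => Finset.sum_comm
    _ = c • ∑ k, B (b k) (b k) := by
        simp [hx, b.inner_eq_ite, Finset.smul_sum]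

theorem lap_comp {ι κ : Type*} [Fintype ι] [DecidableEq ι] [Fintype κ] [DecidableEq κ]
    {v : EuclideanSpace ℝ κ → ℝ} {g : EuclideanSpace ℝ ι → EuclideanSpace ℝ κ}
    {z : EuclideanSpace ℝ ι} (hv : ContDiffAt ℝ 2 v (g z)) (hg : ContDiffAt ℝ 2 g z) :
    lap (v ∘ g) z =
      ∑ i, fderiv ℝ (fderiv ℝ v) (g z) (fderiv ℝ g z (EuclideanSpace.single i 1))
          (fderiv ℝ g z (EuclideanSpace.single i 1)) +
        fderiv ℝ v (g z)
          (∑ i, fderiv ℝ (fderiv ℝ g) z (EuclideanSpace.single i 1)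
            (EuclideanSpace.single i 1)) := by
  simp only [lap, iteratedFDeriv_two_apply, Matrix.cons_val_zero, Matrix.cons_val_one,
    fderiv_fderiv_comp_apply hv hg, map_sum, Finset.sum_add_distrib]

theorem lap_eq_sum_fderiv_fderiv {ι : Type*} [Fintype ι] [DecidableEq ι]
    (u : EuclideanSpace ℝ ι → ℝ) (x : EuclideanSpace ℝ ι) :
    lap u x = ∑ i, fderiv ℝ (fderiv ℝ u) x (EuclideanSpace.basisFun ι ℝ i)
      (EuclideanSpace.basisFun ι ℝ i) := by
  simp [lap, iteratedFDeriv_two_apply]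

local notation "ℝ⁴" => EuclideanSpace ℝ (Fin 4)
local notation "ℝ³" => EuclideanSpace ℝ (Fin 3)

theorem hopfC_apply (x : ℝ⁴) :
    hopfC x = WithLp.toLp 2 ![2 * (x 0 * x 2 + x 1 * x 3), 2 * (x 0 * x 3 - x 1 * x 2),
      x 0 ^ 2 + x 1 ^ 2 - x 2 ^ 2 - x 3 ^ 2] := by
  simp only [hopfC, Complex.mul_re, Complex.mul_im, Complex.sq_norm, Complex.normSq_mk]
  congr 1
  ext k
  fin_cases k <;> simp <;> ring

noncomputable def hopfBilin : ℝ⁴ →L[ℝ] ℝ⁴ →L[ℝ] ℝ³ :=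
  LinearMap.toContinuousLinearMap (LinearMap.toContinuousLinearMap.toLinearMap ∘ₗ
    LinearMap.mk₂ ℝ (fun x y : ℝ⁴ => WithLp.toLp 2
      ![x 0 * y 2 + x 2 * y 0 + x 1 * y 3 + x 3 * y 1,
        x 0 * y 3 + x 3 * y 0 - x 1 * y 2 - x 2 * y 1,
        x 0 * y 0 + x 1 * y 1 - x 2 * y 2 - x 3 * y 3])
      (by intros; ext k; fin_cases k <;> simp <;> ring)
      (by intros; ext k; fin_cases k <;> simp <;> ring)
      (by intros; ext k; fin_cases k <;> simp <;> ring)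
      (by intros; ext k; fin_cases k <;> simp <;> ring))

theorem hopfBilin_apply (x y : ℝ⁴) :
    hopfBilin x y = WithLp.toLp 2
      ![x 0 * y 2 + x 2 * y 0 + x 1 * y 3 + x 3 * y 1,
        x 0 * y 3 + x 3 * y 0 - x 1 * y 2 - x 2 * y 1,
        x 0 * y 0 + x 1 * y 1 - x 2 * y 2 - x 3 * y 3] := rfl

theorem hopfC_eq_hopfBilin : hopfC = fun x => hopfBilin x x := by
  ext1 x
  rw [hopfC_apply, hopfBilin_apply]
  congr 1
  ext k
  fin_cases k <;> simp <;> ring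

theorem contDiff_hopfC {n : WithTop ℕ∞} : ContDiff ℝ n hopfC := by
  rw [hopfC_eq_hopfBilin]
  fun_prop

theorem fderiv_hopfC (z : ℝ⁴) : fderiv ℝ hopfC z = hopfBilin z + hopfBilin.flip z := by
  rw [hopfC_eq_hopfBilin, fderiv_bilinear_diag]

theorem fderiv_fderiv_hopfC_apply (z e e' : ℝ⁴) :
    fderiv ℝ (fderiv ℝ hopfC) z e e' = hopfBilin e e' + hopfBilin e' e := by
  rw [hopfC_eq_hopfBilin, fderiv_fderiv_bilinear_diag_apply]

theorem sum_hopfBilin_single_self :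
    ∑ i, hopfBilin (EuclideanSpace.single i 1) (EuclideanSpace.single i 1) = 0 := by
  ext k
  fin_cases k <;> simp [hopfBilin_apply, Fin.sum_univ_four]

theorem sum_inner_fderiv_hopfC_mul_inner (z : ℝ⁴) (u w : ℝ³) :
    ∑ i, ⟪fderiv ℝ hopfC z (EuclideanSpace.single i 1), u⟫_ℝ *
      ⟪fderiv ℝ hopfC z (EuclideanSpace.single i 1), w⟫_ℝ = 4 * ‖z‖ ^ 2 * ⟪u, w⟫_ℝ := by
  simp [fderiv_hopfC, hopfBilin_apply, EuclideanSpace.real_norm_sq_eq, PiLp.inner_apply,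
    Fin.sum_univ_four, Fin.sum_univ_three]
  ring

theorem norm_hopfC (z : ℝ⁴) : ‖hopfC z‖ = ‖z‖ ^ 2 := by
  rw [← sq_eq_sq₀ (norm_nonneg _) (by positivity), EuclideanSpace.real_norm_sq_eq,
    EuclideanSpace.real_norm_sq_eq]
  simp [hopfC_apply, Fin.sum_univ_four, Fin.sum_univ_three]
  ring

theorem lap_comp_hopfC {v : ℝ³ → ℝ} {z : ℝ⁴} (hv : ContDiffAt ℝ 2 v (hopfC z)) :
    lap (v ∘ hopfC) z = 4 * ‖z‖ ^ 2 * lap v (hopfC z) := by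
  rw [lap_comp hv contDiff_hopfC.contDiffAt]
  simp only [fderiv_fderiv_hopfC_apply, Finset.sum_add_distrib, sum_hopfBilin_single_self,
    add_zero, map_zero]
  rw [(EuclideanSpace.basisFun (Fin 3) ℝ).sum_apply_self_eq_smul_of_sum_inner_mul_inner _ _
    (sum_inner_fderiv_hopfC_mul_inner z), lap_eq_sum_fderiv_fderiv, smul_eq_mul]

theorem hopfC_toLp_eq_iff (a b c d : ℝ) (y : ℝ³) :
    hopfC (WithLp.toLp 2 ![a, b, c, d]) = y ↔
      2 * (a * c + b * d) = y 0 ∧ 2 * (a * d - b * c) = y 1 ∧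
        a ^ 2 + b ^ 2 - c ^ 2 - d ^ 2 = y 2 := by
  rw [hopfC_apply]
  constructor
  · rintro rfl
    simp
  · rintro ⟨h0, h1, h2⟩
    ext k
    fin_cases k <;> simp [h0, h1, h2]

theorem hopfC_surjective : Function.Surjective hopfC := by
  intro y
  have hr : ‖y‖ ^ 2 = y 0 ^ 2 + y 1 ^ 2 + y 2 ^ 2 := by
    simp [EuclideanSpace.real_norm_sq_eq, Fin.sum_univ_three]
  have hr0 := norm_nonneg y
  -- Solve `2 z̄₁ z₂ = y₀ + i y₁`, `|z₁|² - |z₂|² = y₂` with `z₁` real: then `z₁² = (‖y‖ + y₂) / 2`.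
  rcases (show -‖y‖ ≤ y 2 by nlinarith).lt_or_eq with hlt | heq
  · set s := √((‖y‖ + y 2) / 2)
    have hs : 0 < s := Real.sqrt_pos.2 (by linarith)
    have hs2 : s ^ 2 = (‖y‖ + y 2) / 2 := Real.sq_sqrt (by linarith)
    refine ⟨_, (hopfC_toLp_eq_iff s 0 (y 0 / (2 * s)) (y 1 / (2 * s)) y).2 ⟨?_, ?_, ?_⟩⟩
    · field_simp
      ring
    · field_simp
      ring
    · field_simp
      nlinarith
  · have hy0 : y 0 = 0 := by nlinarith
    have hy1 : y 1 = 0 := by nlinarith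
    refine ⟨_, (hopfC_toLp_eq_iff 0 0 √‖y‖ 0 y).2 ⟨?_, ?_, ?_⟩⟩
    · simp [hy0]
    · simp [hy1]
    · rw [Real.sq_sqrt hr0]
      linarith

theorem neg_lap_comp_hopfC_add_mul_eq_iff {v : ℝ³ → ℝ} {z : ℝ⁴}
    (hv : ContDiffAt ℝ 2 v (hopfC z)) (hz : hopfC z ≠ 0) (a b : ℝ) :
    -lap (v ∘ hopfC) z + a * (v ∘ hopfC) z = b ↔
      -lap v (hopfC z) + a / (4 * ‖hopfC z‖) * v (hopfC z) = 1 / (4 * ‖hopfC z‖) * b := by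
  have hnorm : ‖hopfC z‖ ≠ 0 := norm_ne_zero_iff.2 hz
  rw [lap_comp_hopfC hv, ← norm_hopfC, Function.comp_apply]
  field_simp

theorem stmt_7_general (U : Set (EuclideanSpace ℝ (Fin 3))) (hU : IsSmoothDomain U)
    (h0 : (0 : EuclideanSpace ℝ (Fin 3)) ∉ closure U) (a : ℝ)
    (f : ℝ → ℝ) :
    (∀ v : EuclideanSpace ℝ (Fin 3) → ℝ,
      ContDiffOn ℝ 2 v U → ContinuousOn v (closure U) →
      (∀ x ∈ U, - lap v x + (a / (4 * ‖x‖)) * v x = (1 / (4 * ‖x‖)) * f (v x)) →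
      (∀ x ∈ frontier U, v x = 0) →
        (ContDiffOn ℝ 2 (v ∘ hopfC) (hopfC ⁻¹' U) ∧
         ContinuousOn (v ∘ hopfC) (closure (hopfC ⁻¹' U)) ∧
         (∀ z ∈ hopfC ⁻¹' U, - lap (v ∘ hopfC) z + a * (v ∘ hopfC) z = f ((v ∘ hopfC) z)) ∧
         (∀ z ∈ frontier (hopfC ⁻¹' U), (v ∘ hopfC) z = 0))) ∧
    (∀ v : EuclideanSpace ℝ (Fin 3) → ℝ, ContDiffOn ℝ 2 v U →
      (∀ z ∈ hopfC ⁻¹' U, - lap (v ∘ hopfC) z + a * (v ∘ hopfC) z = f ((v ∘ hopfC) z)) →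
      ∀ x ∈ U, - lap v x + (a / (4 * ‖x‖)) * v x = (1 / (4 * ‖x‖)) * f (v x)) := by
  have hcont : Continuous hopfC := contDiff_hopfC.continuous (n := 0)
  have hv_at {v : ℝ³ → ℝ} (hv : ContDiffOn ℝ 2 v U) {z : ℝ⁴} (hz : hopfC z ∈ U) :
      ContDiffAt ℝ 2 v (hopfC z) :=
    hv.contDiffAt (hU.isOpen.mem_nhds hz)
  have hne {z : ℝ⁴} (hz : hopfC z ∈ U) : hopfC z ≠ 0 := fun h => h0 (h ▸ subset_closure hz)
  refine ⟨fun v hv hvc hpde hbd => ⟨?_, ?_, fun z hz => ?_, fun z hz => ?_⟩,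
    fun v hv hpde x hx => ?_⟩
  · exact hv.comp contDiff_hopfC.contDiffOn (Set.mapsTo_preimage _ _)
  · exact hvc.comp hcont.continuousOn fun z hz => hcont.closure_preimage_subset U hz
  · exact (neg_lap_comp_hopfC_add_mul_eq_iff (hv_at hv hz) (hne hz) a _).2 (hpde _ hz)
  · exact hbd _ (hcont.frontier_preimage_subset U hz)
  · obtain ⟨z, rfl⟩ := hopfC_surjective x
    exact (neg_lap_comp_hopfC_add_mul_eq_iff (hv_at hv hx) (hne hx) a _).1 (hpde z hx)

/-- the Ruf–Srikanth reduction via the Hopf map ℝ⁴ → ℝ³. -/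
theorem stmt_7 (U : Set (EuclideanSpace ℝ (Fin 3))) (hU : IsSmoothDomain U)
    (h0 : (0 : EuclideanSpace ℝ (Fin 3)) ∉ closure U) (a : ℝ)
    (f : ℝ → ℝ) (hf : Continuous f) :
    (∀ v : EuclideanSpace ℝ (Fin 3) → ℝ,
      ContDiffOn ℝ 2 v U → ContinuousOn v (closure U) →
      (∀ x ∈ U, - lap v x + (a / (4 * ‖x‖)) * v x = (1 / (4 * ‖x‖)) * f (v x)) →
      (∀ x ∈ frontier U, v x = 0) →
        (ContDiffOn ℝ 2 (v ∘ hopfC) (hopfC ⁻¹' U) ∧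
         ContinuousOn (v ∘ hopfC) (closure (hopfC ⁻¹' U)) ∧
         (∀ z ∈ hopfC ⁻¹' U, - lap (v ∘ hopfC) z + a * (v ∘ hopfC) z = f ((v ∘ hopfC) z)) ∧
         (∀ z ∈ frontier (hopfC ⁻¹' U), (v ∘ hopfC) z = 0))) ∧
    (∀ v : EuclideanSpace ℝ (Fin 3) → ℝ, ContDiffOn ℝ 2 v U →
      (∀ z ∈ hopfC ⁻¹' U, - lap (v ∘ hopfC) z + a * (v ∘ hopfC) z = f ((v ∘ hopfC) z)) →
      ∀ x ∈ U, - lap v x + (a / (4 * ‖x‖)) * v x = (1 / (4 * ‖x‖)) * f (v x)) :=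
  stmt_7_general U hU h0 a f
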